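/- arXiv:2302.07847 — 4 statements merged into one kernel-verified Lean document; each statement's English description precedes it below -/
import Mathlib

section
/- Let H be a complex Hilbert space, K a bounded operator on H, and C, C' positive invertible bounded operators that commute with each other, with K, and with every member of a family (T_i)_{i∈I} of bounded operators. If (T_i) is a K-operator frame (A²‖K*x‖² ≤ Σ_i ‖T_i x‖² ≤ B²‖x‖² for all x), then (T_i) is a (C,C')-controlled K-operator frame: there exist constants A', B' > 0 with A'²‖K*x‖² ≤ Σ_i ⟨T_i C x, T_i C' x⟩ ≤ B'²‖x‖² for all x ∈ H. -/
/-!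
The strictly positive operator `P = C C'` (positive because `C` and `C'` commute, invertible
because both factors are) has spectrum bounded away from `0`, so its quadratic form is comparable
to the squared norm: `m ‖y‖² ≤ re ⟪y, P y⟫ ≤ ‖P‖ ‖y‖²` with `m > 0`. Since `C` and `C'` commute
with `T i` and `C` is self-adjoint, `⟪T i (C x), T i (C' x)⟫ = ⟪T i x, P (T i x)⟫`, so the
controlled frame sum is squeezed between `m` and `‖P‖` times the ordinary frame sum.
-/

open scoped ComplexInnerProductSpace

section QuadraticForm

variable {H : Type*} [NormedAddCommGroup H] [InnerProductSpace ℂ H]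

lemma ContinuousLinearMap.re_inner_apply_le_opNorm_mul_norm_sq (P : H →L[ℂ] H) (y : H) :
    (⟪y, P y⟫).re ≤ ‖P‖ * ‖y‖ ^ 2 :=
  calc (⟪y, P y⟫).re ≤ ‖⟪y, P y⟫‖ := Complex.re_le_norm _
    _ ≤ ‖y‖ * ‖P y‖ := norm_inner_le_norm _ _
    _ ≤ ‖y‖ * (‖P‖ * ‖y‖) := by gcongr; exact P.le_opNorm y
    _ = ‖P‖ * ‖y‖ ^ 2 := by ring

lemma ContinuousLinearMap.mul_norm_sq_le_re_inner_apply_of_algebraMap_le {P : H →L[ℂ] H} {r : ℝ}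
    (h : algebraMap ℝ (H →L[ℂ] H) r ≤ P) (y : H) : r * ‖y‖ ^ 2 ≤ (⟪y, P y⟫).re := by
  have hdiff := ((le_def _ _).mp h).re_inner_nonneg_right y
  have halg : (⟪y, algebraMap ℝ (H →L[ℂ] H) r y⟫).re = r * ‖y‖ ^ 2 := by
    simp [Algebra.algebraMap_eq_smul_one, inner_self_eq_norm_sq_to_K, ← Complex.ofReal_pow]
  simp only [sub_apply, inner_sub_right, map_sub, RCLike.re_to_complex] at hdiff
  linarith

lemma IsStrictlyPositive.exists_pos_mul_norm_sq_le_re_inner_apply [CompleteSpace H]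
    {P : H →L[ℂ] H} (hP : IsStrictlyPositive P) :
    ∃ m > 0, ∀ y, m * ‖y‖ ^ 2 ≤ (⟪y, P y⟫).re := by
  rcases subsingleton_or_nontrivial H with hH | hH
  · exact ⟨1, one_pos, fun y => by simp [Subsingleton.elim y 0]⟩
  obtain ⟨m, hm, hmP⟩ :=
    (CFC.exists_pos_algebraMap_le_iff hP.isSelfAdjoint).mpr fun _ => hP.spectrum_pos
  exact ⟨m, hm, P.mul_norm_sq_le_re_inner_apply_of_algebraMap_le hmP⟩

end QuadraticForm

lemma mul_tsum_le_tsum_and_tsum_le_mul_tsum {ι : Type*} {f g : ι → ℝ} {m M : ℝ} (hm : 0 < m)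
    (hg : ∀ i, 0 ≤ g i) (hlow : ∀ i, m * g i ≤ f i) (hup : ∀ i, f i ≤ M * g i) :
    m * ∑' i, g i ≤ ∑' i, f i ∧ ∑' i, f i ≤ M * ∑' i, g i := by
  by_cases hsg : Summable g
  · have hsf : Summable f :=
      .of_nonneg_of_le (fun i => (mul_nonneg hm.le (hg i)).trans (hlow i)) hup (hsg.mul_left M)
    rw [← tsum_mul_left, ← tsum_mul_left]
    exact ⟨(hsg.mul_left m).tsum_le_tsum hlow hsf, hsf.tsum_le_tsum hup (hsg.mul_left M)⟩
  · have hsf : ¬ Summable f := fun hsf =>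
      hsg (.of_nonneg_of_le hg (fun i => (le_div_iff₀' hm).mpr (hlow i)) (hsf.div_const m))
    simp [tsum_eq_zero_of_not_summable hsg, tsum_eq_zero_of_not_summable hsf]

theorem stmt_2_general {H : Type*} [NormedAddCommGroup H] [InnerProductSpace ℂ H] [CompleteSpace H]
    {I : Type*} (K C C' : H →L[ℂ] H)
    (hC : C.IsPositive) (hC' : C'.IsPositive) (hCu : IsUnit C) (hC'u : IsUnit C')
    (hCC' : C ∘L C' = C' ∘L C)
    (T : I → (H →L[ℂ] H))
    (hCT : ∀ i, C ∘L T i = T i ∘L C) (hC'T : ∀ i, C' ∘L T i = T i ∘L C')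
    (A B : ℝ) (hA : 0 < A) (hB : 0 < B)
    (hframe : ∀ x : H,
      A ^ 2 * ‖ContinuousLinearMap.adjoint K x‖ ^ 2 ≤ ∑' i, ‖T i x‖ ^ 2 ∧
      ∑' i, ‖T i x‖ ^ 2 ≤ B ^ 2 * ‖x‖ ^ 2) :
    ∃ A' B' : ℝ, 0 < A' ∧ 0 < B' ∧ ∀ x : H,
      A' ^ 2 * ‖ContinuousLinearMap.adjoint K x‖ ^ 2 ≤ ∑' i, (⟪T i (C x), T i (C' x)⟫).re ∧
      ∑' i, (⟪T i (C x), T i (C' x)⟫).re ≤ B' ^ 2 * ‖x‖ ^ 2 := by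
  set P := C * C'
  have hP : IsStrictlyPositive P := IsStrictlyPositive.iff_of_unital.mpr
    ⟨Commute.mul_nonneg (C.nonneg_iff_isPositive.mpr hC) (C'.nonneg_iff_isPositive.mpr hC') hCC',
      hCu.mul hC'u⟩
  have hterm : ∀ i x, (⟪T i (C x), T i (C' x)⟫).re = (⟪T i x, P (T i x)⟫).re := fun i x => by
    have hCx : T i (C x) = C (T i x) := (DFunLike.congr_fun (hCT i) x).symm
    have hC'x : T i (C' x) = C' (T i x) := (DFunLike.congr_fun (hC'T i) x).symm
    rw [hCx, hC'x]
    exact congrArg Complex.re (hC.isSymmetric _ _)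
  obtain ⟨m, hm, hlow⟩ := hP.exists_pos_mul_norm_sq_le_re_inner_apply
  set M := ‖P‖ + 1
  have hup (y : H) : (⟪y, P y⟫).re ≤ M * ‖y‖ ^ 2 :=
    (P.re_inner_apply_le_opNorm_mul_norm_sq y).trans (by gcongr; linarith)
  refine ⟨A * √m, B * √M, by positivity, by positivity, fun x => ?_⟩
  obtain ⟨hsum_low, hsum_up⟩ := mul_tsum_le_tsum_and_tsum_le_mul_tsum hm
    (fun i => sq_nonneg ‖T i x‖) (fun i => hterm i x ▸ hlow (T i x))
    (fun i => hterm i x ▸ hup (T i x))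
  obtain ⟨hframe_low, hframe_up⟩ := hframe x
  rw [mul_pow, mul_pow, Real.sq_sqrt hm.le, Real.sq_sqrt (by positivity)]
  constructor
  · calc A ^ 2 * m * ‖ContinuousLinearMap.adjoint K x‖ ^ 2
        = m * (A ^ 2 * ‖ContinuousLinearMap.adjoint K x‖ ^ 2) := by ring
      _ ≤ m * ∑' i, ‖T i x‖ ^ 2 := by gcongr
      _ ≤ _ := hsum_low
  · calc _ ≤ M * ∑' i, ‖T i x‖ ^ 2 := hsum_up
      _ ≤ M * (B ^ 2 * ‖x‖ ^ 2) := by gcongr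
      _ = B ^ 2 * M * ‖x‖ ^ 2 := by ring

theorem stmt_2 {H : Type*} [NormedAddCommGroup H] [InnerProductSpace ℂ H] [CompleteSpace H]
    {I : Type*} (K C C' : H →L[ℂ] H)
    (hC : C.IsPositive) (hC' : C'.IsPositive) (hCu : IsUnit C) (hC'u : IsUnit C')
    (hCC' : C ∘L C' = C' ∘L C) (hCK : C ∘L K = K ∘L C) (hC'K : C' ∘L K = K ∘L C')
    (T : I → (H →L[ℂ] H))
    (hCT : ∀ i, C ∘L T i = T i ∘L C) (hC'T : ∀ i, C' ∘L T i = T i ∘L C')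
    (A B : ℝ) (hA : 0 < A) (hB : 0 < B)
    (hframe : ∀ x : H,
      A ^ 2 * ‖ContinuousLinearMap.adjoint K x‖ ^ 2 ≤ ∑' i, ‖T i x‖ ^ 2 ∧
      ∑' i, ‖T i x‖ ^ 2 ≤ B ^ 2 * ‖x‖ ^ 2) :
    ∃ A' B' : ℝ, 0 < A' ∧ 0 < B' ∧ ∀ x : H,
      A' ^ 2 * ‖ContinuousLinearMap.adjoint K x‖ ^ 2 ≤ ∑' i, (⟪T i (C x), T i (C' x)⟫).re ∧
      ∑' i, (⟪T i (C x), T i (C' x)⟫).re ≤ B' ^ 2 * ‖x‖ ^ 2 :=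
  stmt_2_general K C C' hC hC' hCu hC'u hCC' T hCT hC'T A B hA hB hframe
end

section
/- Let H be a complex Hilbert space, K, Q bounded operators on H, C, C' positive invertible bounded operators, and (T_i)_{i∈I} a (C,C')-controlled K-operator frame with bounds A, B (i.e., A²‖K*x‖² ≤ Σ_i ⟨T_i C x, T_i C' x⟩ ≤ B²‖x‖² for all x). If Q commutes with C, C', and K, then (T_i Q)_{i∈I} is a (C,C')-controlled (Q*K)-operator frame with bounds A and B‖Q‖: that is, A²‖(Q*K)*x‖² ≤ Σ_i ⟨T_i Q C x, T_i Q C' x⟩ ≤ B²‖Q‖²‖x‖² for all x ∈ H. -/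
open scoped ComplexInnerProductSpace

theorem stmt_3 {H : Type*} [NormedAddCommGroup H] [InnerProductSpace ℂ H] [CompleteSpace H]
    {I : Type*} (K Q C C' : H →L[ℂ] H)
    (hC : C.IsPositive) (hC' : C'.IsPositive) (hCu : IsUnit C) (hC'u : IsUnit C')
    (hQC : Q ∘L C = C ∘L Q) (hQC' : Q ∘L C' = C' ∘L Q) (hQK : Q ∘L K = K ∘L Q)
    (T : I → (H →L[ℂ] H)) (A B : ℝ) (hA : 0 < A) (hB : 0 < B)
    (hframe : ∀ x : H,
      A ^ 2 * ‖ContinuousLinearMap.adjoint K x‖ ^ 2 ≤ ∑' i, (⟪T i (C x), T i (C' x)⟫).re ∧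
      ∑' i, (⟪T i (C x), T i (C' x)⟫).re ≤ B ^ 2 * ‖x‖ ^ 2) :
    ∀ x : H,
      A ^ 2 * ‖ContinuousLinearMap.adjoint (ContinuousLinearMap.adjoint Q ∘L K) x‖ ^ 2 ≤
        ∑' i, (⟪T i (Q (C x)), T i (Q (C' x))⟫).re ∧
      ∑' i, (⟪T i (Q (C x)), T i (Q (C' x))⟫).re ≤ B ^ 2 * ‖Q‖ ^ 2 * ‖x‖ ^ 2 := by
  intro x
  have hadj : ContinuousLinearMap.adjoint (ContinuousLinearMap.adjoint Q ∘L K) x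
      = ContinuousLinearMap.adjoint K (Q x) := by
    rw [ContinuousLinearMap.adjoint_comp, ContinuousLinearMap.adjoint_adjoint]
    rfl
  have hCx : Q (C x) = C (Q x) := by
    have := congrArg (fun f => f x) hQC
    simpa using this
  have hC'x : Q (C' x) = C' (Q x) := by
    have := congrArg (fun f => f x) hQC'
    simpa using this
  have h := hframe (Q x)
  rw [hadj, hCx, hC'x]
  refine ⟨h.1, h.2.trans ?_⟩
  have hQx : ‖Q x‖ ≤ ‖Q‖ * ‖x‖ := Q.le_opNorm x
  have : ‖Q x‖ ^ 2 ≤ (‖Q‖ * ‖x‖) ^ 2 := by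
    exact pow_le_pow_left₀ (norm_nonneg _) hQx 2
  nlinarith [sq_nonneg B]
end

section
/- Let H be a complex Hilbert space, K a bounded operator, C, C' positive invertible bounded operators, and (T_i)_{i∈I} a (C,C')-controlled K-operator frame with bounds A, B. Let Q : H → H be a bounded invertible operator such that Q and Q⁻¹ commute with C and C', and Q⁻¹ commutes with K*. Then (T_i Q)_{i∈I} is a (C,C')-controlled K-operator frame with lower bound A‖Q⁻¹‖⁻¹ and upper bound B‖Q‖: (A‖Q⁻¹‖⁻¹)²‖K*x‖² ≤ Σ_i ⟨T_i Q C x, T_i Q C' x⟩ ≤ (B‖Q‖)²‖x‖² for all x ∈ H. -/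
open scoped ComplexInnerProductSpace

theorem stmt_5 {H : Type*} [NormedAddCommGroup H] [InnerProductSpace ℂ H] [CompleteSpace H]
    {I : Type*} (K Q Qinv C C' : H →L[ℂ] H)
    (hC : C.IsPositive) (hC' : C'.IsPositive) (hCu : IsUnit C) (hC'u : IsUnit C')
    (hQ1 : Q ∘L Qinv = ContinuousLinearMap.id ℂ H)
    (hQ2 : Qinv ∘L Q = ContinuousLinearMap.id ℂ H)
    (hQC : Q ∘L C = C ∘L Q) (hQC' : Q ∘L C' = C' ∘L Q)
    (hQiC : Qinv ∘L C = C ∘L Qinv) (hQiC' : Qinv ∘L C' = C' ∘L Qinv)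
    (hQiK : Qinv ∘L ContinuousLinearMap.adjoint K = ContinuousLinearMap.adjoint K ∘L Qinv)
    (T : I → (H →L[ℂ] H)) (A B : ℝ) (hA : 0 < A) (hB : 0 < B)
    (hframe : ∀ x : H,
      A ^ 2 * ‖ContinuousLinearMap.adjoint K x‖ ^ 2 ≤ ∑' i, (⟪T i (C x), T i (C' x)⟫).re ∧
      ∑' i, (⟪T i (C x), T i (C' x)⟫).re ≤ B ^ 2 * ‖x‖ ^ 2) :
    ∀ x : H,
      (A * ‖Qinv‖⁻¹) ^ 2 * ‖ContinuousLinearMap.adjoint K x‖ ^ 2 ≤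
        ∑' i, (⟪T i (Q (C x)), T i (Q (C' x))⟫).re ∧
      ∑' i, (⟪T i (Q (C x)), T i (Q (C' x))⟫).re ≤ (B * ‖Q‖) ^ 2 * ‖x‖ ^ 2 := by

  intro x
  have h1 : Q (C x) = C (Q x) := by
    have := ContinuousLinearMap.ext_iff.mp hQC x; simpa using this
  have h2 : Q (C' x) = C' (Q x) := by
    have := ContinuousLinearMap.ext_iff.mp hQC' x; simpa using this
  have hsum : (∑' i, (⟪T i (Q (C x)), T i (Q (C' x))⟫).re)
      = ∑' i, (⟪T i (C (Q x)), T i (C' (Q x))⟫).re := by rw [h1, h2]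
  obtain ⟨hlo, hhi⟩ := hframe (Q x)
  have hKx : (ContinuousLinearMap.adjoint K) x
      = Qinv ((ContinuousLinearMap.adjoint K) (Q x)) := by
    have hcomm := ContinuousLinearMap.ext_iff.mp hQiK (Q x)
    have hinv : Qinv (Q x) = x := by
      have := ContinuousLinearMap.ext_iff.mp hQ2 x; simpa using this
    simp only [ContinuousLinearMap.comp_apply] at hcomm
    rw [hcomm, hinv]
  have hnorm : ‖(ContinuousLinearMap.adjoint K) x‖
      ≤ ‖Qinv‖ * ‖(ContinuousLinearMap.adjoint K) (Q x)‖ := by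
    rw [hKx]; exact Qinv.le_opNorm _
  constructor
  · rw [hsum]
    refine le_trans ?_ hlo
    by_cases hz : ‖Qinv‖ = 0
    · have : Qinv = 0 := by simpa [hz] using norm_eq_zero.mp hz
      have : (ContinuousLinearMap.adjoint K) x = 0 := by rw [hKx, this]; simp
      simp [this]
      positivity
    · have hzpos : 0 < ‖Qinv‖ := lt_of_le_of_ne (norm_nonneg _) (Ne.symm hz)
      have key : ‖Qinv‖⁻¹ * ‖(ContinuousLinearMap.adjoint K) x‖
          ≤ ‖(ContinuousLinearMap.adjoint K) (Q x)‖ := by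
        rw [inv_mul_le_iff₀ hzpos]; exact hnorm
      have := mul_le_mul key key (by positivity) (norm_nonneg _)
      calc (A * ‖Qinv‖⁻¹) ^ 2 * ‖(ContinuousLinearMap.adjoint K) x‖ ^ 2
          = A ^ 2 * ((‖Qinv‖⁻¹ * ‖(ContinuousLinearMap.adjoint K) x‖)
            * (‖Qinv‖⁻¹ * ‖(ContinuousLinearMap.adjoint K) x‖)) := by ring
        _ ≤ A ^ 2 * (‖(ContinuousLinearMap.adjoint K) (Q x)‖
            * ‖(ContinuousLinearMap.adjoint K) (Q x)‖) := by
            exact mul_le_mul_of_nonneg_left this (by positivity)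
        _ = A ^ 2 * ‖(ContinuousLinearMap.adjoint K) (Q x)‖ ^ 2 := by ring
  · rw [hsum]
    refine hhi.trans ?_
    have hQn : ‖Q x‖ ≤ ‖Q‖ * ‖x‖ := Q.le_opNorm x
    have := mul_le_mul hQn hQn (norm_nonneg _) (by positivity)
    calc B ^ 2 * ‖Q x‖ ^ 2 = B ^ 2 * (‖Q x‖ * ‖Q x‖) := by ring
      _ ≤ B ^ 2 * (‖Q‖ * ‖x‖ * (‖Q‖ * ‖x‖)) := mul_le_mul_of_nonneg_left this (by positivity)
      _ = (B * ‖Q‖) ^ 2 * ‖x‖ ^ 2 := by ring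
end

section
/- Let H be a complex Hilbert space, K a bounded operator on H with dense range, C, C' positive invertible bounded operators, and U a bounded operator with closed range commuting with C and C'. If both (T_i U)_{i∈I} and (T_i U*)_{i∈I} are (C,C')-controlled K-operator frames for some family (T_i) of bounded operators on H, then U is invertible (bijective). -/
/-!
If `V x = 0` and `V` commutes with `C`, every term `⟪S i (V (C x)), S i (V (C' x))⟫` of a
controlled frame sum at `x` vanishes, so the lower frame bound forces `K* x = 0`, i.e. `x = 0`
because `K` has dense range. Applied to `U`, and to `U*` (which commutes with `C` since `C` is
self-adjoint), this makes `U` injective with dense range, and a closed dense range is everything.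
-/

open scoped InnerProductSpace ComplexInnerProductSpace

namespace ContinuousLinearMap

variable {𝕜 E F G : Type*} [RCLike 𝕜] [NormedAddCommGroup E] [NormedAddCommGroup F]
  [NormedAddCommGroup G] [InnerProductSpace 𝕜 E] [InnerProductSpace 𝕜 F] [InnerProductSpace 𝕜 G]
  [CompleteSpace E] [CompleteSpace F]

theorem denseRange_iff_injective_adjoint (T : E →L[𝕜] F) :
    DenseRange T ↔ Function.Injective (adjoint T) := by
  change Dense (T.range : Set F) ↔ _
  rw [Submodule.dense_iff_topologicalClosure_eq_top, Submodule.topologicalClosure_eq_top_iff,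
    orthogonal_range, LinearMap.ker_eq_bot']
  exact (injective_iff_map_eq_zero _).symm

theorem surjective_of_isClosed_range_of_injective_adjoint {T : E →L[𝕜] F}
    (hT : IsClosed (Set.range T)) (hT' : Function.Injective (adjoint T)) :
    Function.Surjective T := by
  rw [← Set.range_eq_univ, ← hT.closure_eq]
  exact ((denseRange_iff_injective_adjoint T).2 hT').closure_range

theorem injective_of_controlled_lower_bound {I : Type*} {K : F →L[𝕜] E} {V C C' : E →L[𝕜] E}
    {S : I → E →L[𝕜] G} {A : ℝ} (hA : A ≠ 0) (hK : Function.Injective (adjoint K))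
    (hVC : V ∘L C = C ∘L V)
    (hlower : ∀ x, A ^ 2 * ‖adjoint K x‖ ^ 2 ≤
      ∑' i, RCLike.re ⟪(S i ∘L V) (C x), (S i ∘L V) (C' x)⟫_𝕜) :
    Function.Injective V := by
  refine (injective_iff_map_eq_zero V).2 fun x hx ↦ hK ?_
  have hVCx : V (C x) = 0 := by rw [← comp_apply, hVC, comp_apply, hx, map_zero]
  have hsq : A ^ 2 * ‖adjoint K x‖ ^ 2 ≤ 0 := by simpa [hVCx] using hlower x
  have : ‖adjoint K x‖ ^ 2 = 0 :=
    le_antisymm (nonpos_of_mul_nonpos_right hsq (by positivity)) (by positivity)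
  simpa using this

end ContinuousLinearMap

open ContinuousLinearMap in
theorem stmt_8_general {H : Type*} [NormedAddCommGroup H] [InnerProductSpace ℂ H] [CompleteSpace H]
    {I : Type*} (K U C C' : H →L[ℂ] H)
    (hC : C.IsPositive)
    (hKdense : DenseRange (K : H → H))
    (hUclosed : IsClosed (Set.range (U : H → H)))
    (hUC : U ∘L C = C ∘L U)
    (T : I → (H →L[ℂ] H)) (A₁ B₁ A₂ B₂ : ℝ)
    (hA₁ : 0 < A₁) (hA₂ : 0 < A₂)
    (hframeU : ∀ x : H,
      A₁ ^ 2 * ‖ContinuousLinearMap.adjoint K x‖ ^ 2 ≤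
        ∑' i, (⟪(T i ∘L U) (C x), (T i ∘L U) (C' x)⟫).re ∧
      ∑' i, (⟪(T i ∘L U) (C x), (T i ∘L U) (C' x)⟫).re ≤ B₁ ^ 2 * ‖x‖ ^ 2)
    (hframeUadj : ∀ x : H,
      A₂ ^ 2 * ‖ContinuousLinearMap.adjoint K x‖ ^ 2 ≤
        ∑' i, (⟪(T i ∘L ContinuousLinearMap.adjoint U) (C x),
                (T i ∘L ContinuousLinearMap.adjoint U) (C' x)⟫).re ∧
      ∑' i, (⟪(T i ∘L ContinuousLinearMap.adjoint U) (C x),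
              (T i ∘L ContinuousLinearMap.adjoint U) (C' x)⟫).re ≤ B₂ ^ 2 * ‖x‖ ^ 2) :
    Function.Bijective U := by
  have hK : Function.Injective (adjoint K) := (denseRange_iff_injective_adjoint K).1 hKdense
  have hUadjC : adjoint U ∘L C = C ∘L adjoint U := by
    have := Commute.star_star (x := U) (y := C) hUC
    rwa [hC.isSelfAdjoint.star_eq] at this
  refine ⟨injective_of_controlled_lower_bound hA₁.ne' hK hUC fun x ↦ (hframeU x).1, ?_⟩
  exact surjective_of_isClosed_range_of_injective_adjoint hUclosed
    (injective_of_controlled_lower_bound hA₂.ne' hK hUadjC fun x ↦ (hframeUadj x).1)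

theorem stmt_8 {H : Type*} [NormedAddCommGroup H] [InnerProductSpace ℂ H] [CompleteSpace H]
    {I : Type*} (K U C C' : H →L[ℂ] H)
    (hC : C.IsPositive) (hC' : C'.IsPositive) (hCu : IsUnit C) (hC'u : IsUnit C')
    (hKdense : DenseRange (K : H → H))
    (hUclosed : IsClosed (Set.range (U : H → H)))
    (hUC : U ∘L C = C ∘L U) (hUC' : U ∘L C' = C' ∘L U)
    (T : I → (H →L[ℂ] H)) (A₁ B₁ A₂ B₂ : ℝ)
    (hA₁ : 0 < A₁) (hB₁ : 0 < B₁) (hA₂ : 0 < A₂) (hB₂ : 0 < B₂)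
    (hframeU : ∀ x : H,
      A₁ ^ 2 * ‖ContinuousLinearMap.adjoint K x‖ ^ 2 ≤
        ∑' i, (⟪(T i ∘L U) (C x), (T i ∘L U) (C' x)⟫).re ∧
      ∑' i, (⟪(T i ∘L U) (C x), (T i ∘L U) (C' x)⟫).re ≤ B₁ ^ 2 * ‖x‖ ^ 2)
    (hframeUadj : ∀ x : H,
      A₂ ^ 2 * ‖ContinuousLinearMap.adjoint K x‖ ^ 2 ≤
        ∑' i, (⟪(T i ∘L ContinuousLinearMap.adjoint U) (C x),
                (T i ∘L ContinuousLinearMap.adjoint U) (C' x)⟫).re ∧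
      ∑' i, (⟪(T i ∘L ContinuousLinearMap.adjoint U) (C x),
              (T i ∘L ContinuousLinearMap.adjoint U) (C' x)⟫).re ≤ B₂ ^ 2 * ‖x‖ ^ 2) :
    Function.Bijective U :=
  stmt_8_general K U C C' hC hKdense hUclosed hUC T A₁ B₁ A₂ B₂ hA₁ hA₂ hframeU hframeUadj
end
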